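/- arXiv:1105.6018 — 3 statements merged into one kernel-verified Lean document; each statement's English description precedes it below -/
import Mathlib

section
/- For each θ ∈ {0,1}^d let D_θ ⊆ ℝ^d be the closed quadrant ∏_{i=1}^d R_{θ_i}, where R_1 = [0,∞) and R_0 = (−∞,0]. If for every θ ∈ {0,1}^d a point x_θ lies in the interior of D_θ, then 0 is an interior point of the convex hull of the finite set {x_θ : θ ∈ {0,1}^d}. -/
/-!
Choosing `θ` to be the sign pattern of a nonzero vector `v` makes every term of
`⟪v, x θ⟫ = ∑ i, v i * x θ i` nonnegative and some term positive, so no nonzero linear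
functional is nonpositive on all the points `x θ`. For a convex set in finite dimensions this
forces `0` into the interior: otherwise a supporting hyperplane through `0` would give such a
functional (the same property also excludes a proper affine span, so the interior is nonempty).
-/

open RealInnerProductSpace

section Separation

variable {E : Type*} [NormedAddCommGroup E] [NormedSpace ℝ E] [FiniteDimensional ℝ E]

theorem affineSpan_eq_top_of_forall_exists_pos {C : Set E} (hne : C.Nonempty)
    (h : ∀ f : StrongDual ℝ E, f ≠ 0 → ∃ y ∈ C, 0 < f y) : affineSpan ℝ C = ⊤ := by
  rw [AffineSubspace.affineSpan_eq_top_iff_vectorSpan_eq_top_of_nonempty ℝ E E hne]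
  by_contra hspan
  obtain ⟨g, hg, hle⟩ := (vectorSpan ℝ C).exists_le_ker_of_lt_top (lt_top_iff_ne_top.2 hspan)
  let f : StrongDual ℝ E := LinearMap.toContinuousLinearMap g
  have hf : f ≠ 0 := fun h0 => hg (by ext y; simpa [f] using congrArg (· y) h0)
  have hconst : ∀ y ∈ C, ∀ y' ∈ C, f y = f y' := fun y hy y' hy' =>
    sub_eq_zero.1 (by simpa [f] using hle (vsub_mem_vectorSpan ℝ hy hy'))
  obtain ⟨y, hy, hpos⟩ := h f hf
  obtain ⟨y', hy', hneg⟩ := h (-f) (neg_ne_zero.2 hf)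
  rw [neg_apply, hconst y' hy' y hy] at hneg
  linarith

theorem Convex.zero_mem_interior_of_forall_exists_pos {C : Set E} (hC : Convex ℝ C)
    (hne : C.Nonempty) (h : ∀ f : StrongDual ℝ E, f ≠ 0 → ∃ y ∈ C, 0 < f y) :
    (0 : E) ∈ interior C := by
  by_contra h0
  have hint : (interior C).Nonempty := by
    rw [hC.interior_nonempty_iff_affineSpan_eq_top]
    exact affineSpan_eq_top_of_forall_exists_pos hne h
  obtain ⟨f, u, hf, hfC, hu⟩ := geometric_hahn_banach_of_nonempty_interior hC
    (convex_singleton 0) (Set.disjoint_singleton_right.2 h0) hint (Set.singleton_nonempty 0)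
  obtain ⟨y, hy, hpos⟩ := h f hf
  linarith [hfC y hy, map_zero f ▸ hu 0 rfl]

end Separation

theorem Convex.zero_mem_interior_of_forall_exists_inner_pos {E : Type*} [NormedAddCommGroup E]
    [InnerProductSpace ℝ E] [FiniteDimensional ℝ E] {C : Set E} (hC : Convex ℝ C)
    (hne : C.Nonempty) (h : ∀ v : E, v ≠ 0 → ∃ y ∈ C, 0 < ⟪v, y⟫) : (0 : E) ∈ interior C := by
  refine hC.zero_mem_interior_of_forall_exists_pos hne fun f hf => ?_
  obtain ⟨y, hy, hpos⟩ := h ((InnerProductSpace.toDual ℝ E).symm f) (by simpa using hf)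
  exact ⟨y, hy, by rwa [InnerProductSpace.toDual_symm_apply] at hpos⟩

theorem EuclideanSpace.inner_pos_of_sign_pattern {ι : Type*} [Fintype ι]
    {v w : EuclideanSpace ℝ ι} (hv : v ≠ 0)
    (hw : ∀ i, if decide (0 < v i) then 0 < w i else w i < 0) : 0 < ⟪v, w⟫ := by
  have hterm : ∀ i, v i ≠ 0 → 0 < w i * v i := by
    intro i hvi
    specialize hw i
    rcases hvi.lt_or_gt with hneg | hpos
    · simp only [hneg.not_gt, decide_false] at hw
      exact mul_pos_of_neg_of_neg hw hneg
    · simp only [hpos, decide_true, if_true] at hw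
      exact mul_pos hw hpos
  obtain ⟨i, hi⟩ : ∃ i, v i ≠ 0 := by
    by_contra! h
    exact hv (by ext i; exact h i)
  simp only [PiLp.inner_apply, RCLike.inner_apply, conj_trivial]
  refine Finset.sum_pos' (fun j _ => ?_) ⟨i, Finset.mem_univ i, hterm i hi⟩
  rcases eq_or_ne (v j) 0 with h | h
  · simp [h]
  · exact (hterm j h).le

/-- If for every sign pattern `θ ∈ {0,1}^d` a point `x θ` lies in the open quadrant
determined by `θ`, then `0` is interior to the convex hull of `{x θ}`. -/
theorem zero_mem_interior_convexHull_of_quadrants {d : ℕ}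
    (x : (Fin d → Bool) → EuclideanSpace ℝ (Fin d))
    (hx : ∀ θ : Fin d → Bool, ∀ i : Fin d,
      if θ i then 0 < x θ i else x θ i < 0) :
    (0 : EuclideanSpace ℝ (Fin d)) ∈ interior (convexHull ℝ (Set.range x)) := by
  refine (convex_convexHull ℝ _).zero_mem_interior_of_forall_exists_inner_pos
    ((Set.range_nonempty x).mono (subset_convexHull ℝ _)) fun v hv => ?_
  let θ : Fin d → Bool := fun i => decide (0 < v i)
  exact ⟨x θ, subset_convexHull ℝ _ (Set.mem_range_self θ),
    EuclideanSpace.inner_pos_of_sign_pattern hv (hx θ)⟩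
end

section
/- Let X be a continuous ℝ^d-valued process on [0,1] and V(t) = conv{X(s) : s ≤ t}. Fix t ∈ (0,1) and ω such that X(t,ω) lies in the interior of V(t)(ω). Then there exists ε > 0 such that V(s)(ω) = V(t)(ω) for all s ∈ (t−ε, t+ε) ∩ [0,1]. -/
/-!
Since the path is continuous, `X t` lies in the closure of `X '' [0, t)`, so `V t` is also the
closed convex hull of `X '' [0, t)`. In finite dimension a convex set and its closure have the
same interior, hence `X t` is interior to `conv (X '' [0, t)) = ⋃_{s < t} conv (X '' [0, s])`.
Squeezing a simplex between `X t` and this union, its finitely many vertices already lie in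
`conv (X '' [0, s₀])` for one `s₀ < t`, so `X t` is interior to that hull. By continuity the
path stays in it on a time window around `t`, and along that window the hull cannot grow.
-/

open Set

theorem Convex.interior_closure_eq_interior {E : Type*} [NormedAddCommGroup E]
    [NormedSpace ℝ E] [FiniteDimensional ℝ E] {s : Set E} (hs : Convex ℝ s) :
    interior (closure s) = interior s := by
  rcases (interior (closure s)).eq_empty_or_nonempty with h | h
  · exact (interior_mono subset_closure).antisymm' (h ▸ empty_subset _)
  refine hs.interior_closure_eq_interior_of_nonempty_interior ?_
  rw [hs.closure.interior_nonempty_iff_affineSpan_eq_top] at h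
  rw [hs.interior_nonempty_iff_affineSpan_eq_top, ← top_le_iff, ← h]
  exact affineSpan_le.mpr
    (closure_minimal (subset_affineSpan _ _) (affineSpan ℝ s).closed_of_finiteDimensional)

theorem Directed.convexHull_iUnion {𝕜 E ι : Type*} [Field 𝕜] [LinearOrder 𝕜]
    [IsStrictOrderedRing 𝕜] [AddCommGroup E] [Module 𝕜 E] {s : ι → Set E}
    (hdir : Directed (· ⊆ ·) s) :
    convexHull 𝕜 (⋃ i, s i) = ⋃ i, convexHull 𝕜 (s i) :=
  (convexHull_min (iUnion_mono fun _ => subset_convexHull 𝕜 _)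
      ((hdir.mono_comp _ fun _ _ h => convexHull_mono h).convex_iUnion
        fun _ => convex_convexHull 𝕜 _)).antisymm
    (iUnion_subset fun i => convexHull_mono (subset_iUnion s i))

theorem Directed.exists_mem_interior_of_mem_interior_iUnion {E ι : Type*}
    [NormedAddCommGroup E] [NormedSpace ℝ E] [FiniteDimensional ℝ E] [Nonempty ι]
    {C : ι → Set E} (hdir : Directed (· ⊆ ·) C) (hC : ∀ i, Convex ℝ (C i)) {x : E}
    (hx : x ∈ interior (⋃ i, C i)) : ∃ i, x ∈ interior (C i) := by
  obtain ⟨b, hxb, hb⟩ :=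
    exists_mem_interior_convexHull_affineBasis (mem_interior_iff_mem_nhds.mp hx)
  choose g hg using fun j => mem_iUnion.mp (hb (subset_convexHull ℝ _ (mem_range_self j)))
  obtain ⟨i, hi⟩ := hdir.finite_le g
  exact ⟨i, interior_mono
    (convexHull_min (range_subset_iff.mpr fun j => hi j (hg j)) (hC i)) hxb⟩

section Path

variable {α : Type*} [LinearOrder α]

theorem image_Ico_eq_iUnion_image_Icc {X : Type*} (f : α → X) (a t : α) :
    f '' Ico a t = ⋃ s : Iio t, f '' Icc a s := by
  rw [← image_iUnion]
  congr 1
  ext u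
  simp only [mem_Ico, mem_iUnion, mem_Icc, Subtype.exists, mem_Iio, exists_prop]
  exact ⟨fun hu => ⟨u, hu.2, hu.1, le_rfl⟩,
    fun ⟨s, hst, hus⟩ => ⟨hus.1, hus.2.trans_lt hst⟩⟩

theorem image_Icc_subset_closure_image_Ico [TopologicalSpace α] [OrderTopology α]
    [DenselyOrdered α] {X : Type*} [TopologicalSpace X] {f : α → X} {a t : α} (hat : a < t)
    (hf : ContinuousWithinAt f (Ico a t) t) : f '' Icc a t ⊆ closure (f '' Ico a t) := by
  rintro _ ⟨u, hu, rfl⟩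
  rcases hu.2.lt_or_eq with hut | rfl
  · exact subset_closure ⟨u, ⟨hu.1, hut⟩, rfl⟩
  · exact hf.mem_closure_image (by rw [closure_Ico hat.ne]; exact right_mem_Icc.mpr hat.le)

theorem exists_lt_mem_interior_convexHull_image_Icc [TopologicalSpace α] [OrderTopology α]
    [DenselyOrdered α] {E : Type*} [NormedAddCommGroup E] [NormedSpace ℝ E]
    [FiniteDimensional ℝ E] {f : α → E} {a t : α} (hat : a < t)
    (hf : ContinuousWithinAt f (Ico a t) t) {x : E}
    (hx : x ∈ interior (closure (convexHull ℝ (f '' Icc a t)))) :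
    ∃ s < t, x ∈ interior (convexHull ℝ (f '' Icc a s)) := by
  have hclosure :
      closure (convexHull ℝ (f '' Icc a t)) ⊆ closure (convexHull ℝ (f '' Ico a t)) :=
    closure_minimal (convexHull_min ((image_Icc_subset_closure_image_Ico hat hf).trans
        (closure_mono (subset_convexHull ℝ _))) (convex_convexHull ℝ _).closure)
      isClosed_closure
  have hdir : Directed (· ⊆ ·) fun s : Iio t => f '' Icc a s :=
    Monotone.directed_le fun _ _ hs => image_mono (Icc_subset_Icc_right hs)
  have : Nonempty (Iio t) := ⟨⟨a, hat⟩⟩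
  have hx' : x ∈ interior (⋃ s : Iio t, convexHull ℝ (f '' Icc a s)) := by
    rw [← hdir.convexHull_iUnion, ← image_Ico_eq_iUnion_image_Icc,
      ← (convex_convexHull ℝ _).interior_closure_eq_interior]
    exact interior_mono hclosure hx
  have hdir_hull : Directed (· ⊆ ·) fun s : Iio t => convexHull ℝ (f '' Icc a s) :=
    hdir.mono_comp _ fun _ _ h => convexHull_mono h
  obtain ⟨⟨s, hst⟩, hs⟩ := hdir_hull.exists_mem_interior_of_mem_interior_iUnion
    (fun _ => convex_convexHull ℝ _) hx'
  exact ⟨s, hst, hs⟩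

theorem convexHull_image_Icc_eq_of_image_subset {𝕜 E : Type*} [Field 𝕜] [LinearOrder 𝕜]
    [IsStrictOrderedRing 𝕜] [AddCommGroup E] [Module 𝕜 E] {f : α → E} {l a b : α}
    (hab : a ≤ b) (h : f '' Icc a b ⊆ convexHull 𝕜 (f '' Icc l a)) :
    convexHull 𝕜 (f '' Icc l b) = convexHull 𝕜 (f '' Icc l a) := by
  refine (convexHull_min ?_ (convex_convexHull 𝕜 _)).antisymm
    (convexHull_mono (image_mono (Icc_subset_Icc_right hab)))
  exact (image_mono (Icc_subset_Icc_union_Icc (b := a))).trans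
    ((image_union ..).subset.trans (union_subset (subset_convexHull 𝕜 _) h))

end Path

/-- If the continuous path of a process satisfies `X t ω ∈ interior (V t ω)` for some
`t ∈ (0,1)`, then the convex hull process is constant in a neighbourhood of `t`. -/
theorem convexHull_locally_constant_process {d : ℕ} {Ω : Type*}
    (X : ℝ → Ω → EuclideanSpace ℝ (Fin d)) (ω : Ω)
    (hcont : ContinuousOn (fun s => X s ω) (Set.Icc (0:ℝ) 1))
    (t : ℝ) (ht : t ∈ Set.Ioo (0:ℝ) 1)
    (hint : X t ω ∈
      interior (closure (convexHull ℝ ((fun s => X s ω) '' Set.Icc (0:ℝ) t)))) :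
    ∃ ε > 0, ∀ s ∈ Set.Ioo (t - ε) (t + ε) ∩ Set.Icc (0:ℝ) 1,
      closure (convexHull ℝ ((fun u => X u ω) '' Set.Icc (0:ℝ) s)) =
        closure (convexHull ℝ ((fun u => X u ω) '' Set.Icc (0:ℝ) t)) := by
  set f := fun u => X u ω
  obtain ⟨ht0, ht1⟩ := ht
  have hft : ContinuousWithinAt f (Icc 0 1) t := hcont t ⟨ht0.le, ht1.le⟩
  obtain ⟨s₀, hs₀t, hs₀⟩ := exists_lt_mem_interior_convexHull_image_Icc ht0
    (hft.mono (Ico_subset_Icc_self.trans (Icc_subset_Icc_right ht1.le))) hint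
  obtain ⟨δ, hδ, hball⟩ :=
    Metric.mem_nhdsWithin_iff.mp (hft (mem_interior_iff_mem_nhds.mp hs₀))
  refine ⟨min δ (t - s₀), lt_min hδ (sub_pos.mpr hs₀t), ?_⟩
  rintro s ⟨⟨hs_lo, hs_hi⟩, hs0, hs1⟩
  have hε := min_le_left δ (t - s₀)
  have hε' := min_le_right δ (t - s₀)
  have hwindow : f '' Icc (min s t) (max s t) ⊆ convexHull ℝ (f '' Icc 0 (min s t)) := by
    rintro _ ⟨u, ⟨hu_lo, hu_hi⟩, rfl⟩
    have hmin : t - min δ (t - s₀) < min s t := lt_min hs_lo (by linarith)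
    have hmax : max s t < t + min δ (t - s₀) := max_lt hs_hi (by linarith)
    refine convexHull_mono (image_mono (Icc_subset_Icc_right (by linarith)))
      (hball ⟨?_, ?_, ?_⟩)
    · rw [Metric.mem_ball, Real.dist_eq, abs_lt]
      constructor <;> linarith
    · exact (le_min hs0 ht0.le).trans hu_lo
    · exact hu_hi.trans (max_le hs1 ht1.le)
  rw [convexHull_image_Icc_eq_of_image_subset (min_le_left s t)
      ((image_mono (Icc_subset_Icc_right (le_max_left s t))).trans hwindow),
    convexHull_image_Icc_eq_of_image_subset (min_le_right s t)
      ((image_mono (Icc_subset_Icc_right (le_max_right s t))).trans hwindow)]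
end

section
/- Let f : [0,1] → ℝ^d be continuous and V(t) = conv{f(s) : s ≤ t}. If for some t ∈ (0,1) the point f(t) is in the interior of V(t), then V is locally constant at t: there is an interval (t−ε, t+ε) on which V is constant. -/
/-!
Let `B(f t, r) ⊆ V(t)` and choose `δ` so that `f` maps `(t - δ, t + δ)` into `B̄(f t, r/2)`.
For `s ≥ t` the new points `f(t, s]` lie in `V(t)`, so `V(s) = V(t)`. For `s < t` we have
`V(t) ⊆ cl conv (V(s) ∪ B̄(f t, r/2))`. A functional `g` separating a point of `V(t)` from
`V(s)` is bounded on `V(t)` by the larger of its bounds on `V(s)` and on the small ball; since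
`g` exceeds its small-ball bound somewhere on `B(f t, r) ⊆ V(t)`, the bound on `V(s)` wins and
the separation is impossible.
-/

open Set Metric

section

variable {E : Type*} [NormedAddCommGroup E] [NormedSpace ℝ E]

theorem ContinuousLinearMap.exists_norm_lt_and_mul_norm_lt_apply (g : E →L[ℝ] ℝ) (hg : g ≠ 0)
    {ρ r : ℝ} (hρ : 0 ≤ ρ) (hρr : ρ < r) : ∃ y : E, ‖y‖ < r ∧ ρ * ‖g‖ < g y := by
  have hr : 0 < r := hρ.trans_lt hρr
  have hg' : 0 < ‖g‖ := norm_pos_iff.2 hg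
  obtain ⟨y, hy, hgy⟩ := g.exists_lt_apply_of_lt_opNorm
    (show ρ / r * ‖g‖ < ‖g‖ by
      have : ρ / r < 1 := (div_lt_one hr).2 hρr
      nlinarith)
  rw [Real.norm_eq_abs, div_mul_eq_mul_div, div_lt_iff₀ hr] at hgy
  rcases le_total 0 (g y) with hpos | hneg
  · refine ⟨r • y, ?_, ?_⟩
    · rw [norm_smul, Real.norm_of_nonneg hr.le]; nlinarith [norm_nonneg y]
    · rw [map_smul, smul_eq_mul]; rw [abs_of_nonneg hpos] at hgy; linarith
  · refine ⟨-(r • y), ?_, ?_⟩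
    · rw [norm_neg, norm_smul, Real.norm_of_nonneg hr.le]; nlinarith [norm_nonneg y]
    · rw [map_neg, map_smul, smul_eq_mul]; rw [abs_of_nonpos hneg] at hgy; linarith

theorem subset_of_subset_closure_convexHull_union_closedBall {A C : Set E} {x : E} {ρ r : ℝ}
    (hC : IsClosed C) (hCc : Convex ℝ C) (hCne : C.Nonempty) (hρ : 0 ≤ ρ) (hρr : ρ < r)
    (hball : ball x r ⊆ A) (hA : A ⊆ closure (convexHull ℝ (C ∪ closedBall x ρ))) :
    A ⊆ C := by
  intro y hyA
  by_contra hyC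
  obtain ⟨g, u, hgC, hgy⟩ := geometric_hahn_banach_closed_point hCc hC hyC
  have hg : g ≠ 0 := by
    rintro rfl
    obtain ⟨c, hc⟩ := hCne
    exact ((hgC c hc).trans hgy).false
  set M := g x + ρ * ‖g‖
  have hhalf : A ⊆ {z | g z ≤ max u M} := by
    refine hA.trans (closure_minimal (convexHull_min ?_ (convex_halfSpace_le g.isLinear _))
      (isClosed_Iic.preimage g.continuous))
    intro z hz
    change g z ≤ max u M
    rcases hz with hz | hz
    · exact le_max_of_le_left (hgC z hz).le
    · refine le_max_of_le_right ?_
      have : g (z - x) ≤ ‖g‖ * ‖z - x‖ := (le_abs_self _).trans (g.le_opNorm _)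
      rw [mem_closedBall, dist_eq_norm] at hz
      rw [map_sub] at this
      nlinarith [norm_nonneg g]
  obtain ⟨w, hw, hgw⟩ := g.exists_norm_lt_and_mul_norm_lt_apply hg hρ hρr
  have hxw : g (x + w) ≤ max u M :=
    hhalf (hball (by rwa [mem_ball, dist_eq_norm, add_sub_cancel_left]))
  rw [map_add] at hxw
  have hMu : max u M = u := max_eq_left (by
    by_contra! h
    rw [max_eq_right h.le] at hxw
    linarith)
  have hgyA : g y ≤ max u M := hhalf hyA
  rw [hMu] at hgyA
  exact hgyA.not_gt hgy

/-- The set `V(t)`. -/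
def hullUpTo (f : ℝ → E) (t : ℝ) : Set E := closure (convexHull ℝ (f '' Icc 0 t))

variable {f : ℝ → E}

theorem isClosed_hullUpTo (t : ℝ) : IsClosed (hullUpTo f t) := isClosed_closure

theorem convex_hullUpTo (t : ℝ) : Convex ℝ (hullUpTo f t) := (convex_convexHull ℝ _).closure

theorem image_Icc_subset_hullUpTo {s t : ℝ} (hst : s ≤ t) : f '' Icc 0 s ⊆ hullUpTo f t :=
  (image_mono (Icc_subset_Icc_right hst)).trans ((subset_convexHull ℝ _).trans subset_closure)

theorem hullUpTo_mono : Monotone (hullUpTo f) := fun _ _ hst =>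
  closure_minimal (convexHull_min (image_Icc_subset_hullUpTo hst) (convex_hullUpTo _))
    (isClosed_hullUpTo _)

theorem hullUpTo_eq_of_image_Icc_subset {s t : ℝ} (hts : t ≤ s)
    (h : f '' Icc t s ⊆ hullUpTo f t) : hullUpTo f s = hullUpTo f t := by
  refine (hullUpTo_mono hts).antisymm' (closure_minimal (convexHull_min ?_ (convex_hullUpTo t))
    (isClosed_hullUpTo t))
  calc f '' Icc 0 s ⊆ f '' (Icc 0 t ∪ Icc t s) := image_mono Icc_subset_Icc_union_Icc
    _ = f '' Icc 0 t ∪ f '' Icc t s := image_union _ _ _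
    _ ⊆ hullUpTo f t := union_subset (image_Icc_subset_hullUpTo le_rfl) h

theorem hullUpTo_eq_of_image_Icc_subset_closedBall {s t ρ r : ℝ} {x : E} (hs : 0 ≤ s)
    (hst : s ≤ t) (hρ : 0 ≤ ρ) (hρr : ρ < r) (hball : ball x r ⊆ hullUpTo f t)
    (h : f '' Icc s t ⊆ closedBall x ρ) : hullUpTo f s = hullUpTo f t := by
  refine (hullUpTo_mono hst).antisymm (subset_of_subset_closure_convexHull_union_closedBall
    (isClosed_hullUpTo s) (convex_hullUpTo s) ⟨f 0, image_Icc_subset_hullUpTo le_rfl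
      ⟨0, left_mem_Icc.2 hs, rfl⟩⟩ hρ hρr hball (closure_mono (convexHull_mono ?_)))
  calc f '' Icc 0 t ⊆ f '' (Icc 0 s ∪ Icc s t) := image_mono Icc_subset_Icc_union_Icc
    _ = f '' Icc 0 s ∪ f '' Icc s t := image_union _ _ _
    _ ⊆ hullUpTo f s ∪ closedBall x ρ :=
      union_subset_union (image_Icc_subset_hullUpTo le_rfl) h

end

/-- If `f` is continuous and `f t` is interior to `V t = conv (f '' [0,t])` for some
`t ∈ (0,1)`, then `V` is locally constant at `t`. -/
theorem convexHull_locally_constant {d : ℕ}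
    (f : ℝ → EuclideanSpace ℝ (Fin d))
    (hcont : ContinuousOn f (Set.Icc (0:ℝ) 1))
    (t : ℝ) (ht : t ∈ Set.Ioo (0:ℝ) 1)
    (hint : f t ∈ interior (closure (convexHull ℝ (f '' Set.Icc (0:ℝ) t)))) :
    ∃ ε > 0, ∀ s ∈ Set.Ioo (t - ε) (t + ε) ∩ Set.Icc (0:ℝ) 1,
      closure (convexHull ℝ (f '' Set.Icc (0:ℝ) s)) =
        closure (convexHull ℝ (f '' Set.Icc (0:ℝ) t)) := by
  obtain ⟨r, hr, hball⟩ := Metric.mem_nhds_iff.1 (mem_interior_iff_mem_nhds.1 hint)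
  obtain ⟨δ, hδ, hδf⟩ := Metric.continuousWithinAt_iff.1 (hcont t (Ioo_subset_Icc_self ht))
    (r / 2) (half_pos hr)
  have hnear : ∀ a b, 0 ≤ a → b ≤ 1 → t - δ < a → b < t + δ →
      f '' Icc a b ⊆ closedBall (f t) (r / 2) := by
    rintro a b ha hb hta hbt _ ⟨v, hv, rfl⟩
    refine (hδf ⟨ha.trans hv.1, hv.2.trans hb⟩ ?_).le
    rw [Real.dist_eq, abs_lt]
    constructor <;> linarith [hv.1, hv.2]
  refine ⟨δ, hδ, fun s ⟨hsδ, hs⟩ => ?_⟩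
  rcases le_total t s with hts | hst
  · exact hullUpTo_eq_of_image_Icc_subset hts ((hnear t s ht.1.le hs.2 (by linarith) hsδ.2).trans
      ((closedBall_subset_ball (half_lt_self hr)).trans hball))
  · exact hullUpTo_eq_of_image_Icc_subset_closedBall hs.1 hst (half_pos hr).le (half_lt_self hr)
      hball (hnear s t hs.1 ht.2.le hsδ.1 (by linarith))
end
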